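/- Let U and V be Hilbert C*-modules over a unital C*-algebra A and T : U → V an A-linear map. Then T is bounded if and only if there exists k > 0 such that ⟨Tf, Tf⟩ ≤ k⟨f, f⟩ in the positive cone of A, for all f ∈ U. -/

import Mathlib

open MeasureTheory CStarModule
open scoped RightActions

/-- The Hilbert C*-module class of Mathlib (December 2024): a right `A`-action, with the inner
product `A`-linear in the second argument. Mathlib's `CStarModule` now uses a left action. -/
class CStarModuleRight (A : outParam <| Type*) (E : Type*) [NonUnitalSemiring A] [StarRing A]
    [Module ℂ A] [AddCommGroup E] [Module ℂ E] [PartialOrder A] [SMul Aᵐᵒᵖ E] [Norm A] [Norm E]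
    extends Inner A E where
  inner_add_right {x} {y} {z} : inner x (y + z) = inner x y + inner x z
  inner_self_nonneg {x} : 0 ≤ inner x x
  inner_self {x} : inner x x = 0 ↔ x = 0
  inner_op_smul_right {a : A} {x y : E} : inner x (y <• a) = inner x y * a
  inner_smul_right_complex {z : ℂ} {x} {y} : inner x (z • y) = z • inner x y
  star_inner x y : star (inner x y) = inner y x
  norm_eq_sqrt_norm_inner_self x : ‖x‖ = Real.sqrt ‖inner x x‖

variable {A : Type*} [CStarAlgebra A] [PartialOrder A] [StarOrderedRing A]
variable {U : Type*} [NormedAddCommGroup U] [NormedSpace ℂ U] [CompleteSpace U]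
  [SMul Aᵐᵒᵖ U] [CStarModuleRight A U]
variable {Ω : Type*} [MeasurableSpace Ω]

local notation "⟪" x ", " y "⟫" => (inner A x y : A)

/-- `F : Ω → U` is a continuous frame for the Hilbert C*-module `U` with bounds `A₀`, `B`. -/
def IsContinuousFrame (μ : Measure Ω) (F : Ω → U) (A₀ B : ℝ) : Prop :=
  0 < A₀ ∧ 0 < B ∧
  (∀ f : U, StronglyMeasurable fun ω => (inner A f (F ω) : A)) ∧
  (∀ f : U, Integrable (fun ω => (inner A f (F ω) : A) * inner A (F ω) f) μ) ∧
  ∀ f : U, A₀ • (inner A f f : A) ≤ (∫ ω, (inner A f (F ω) : A) * inner A (F ω) f ∂μ) ∧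
    (∫ ω, (inner A f (F ω) : A) * inner A (F ω) f ∂μ) ≤ B • (inner A f f : A)

/-- `F : Ω → U` is a continuous Bessel mapping with bound `B`. -/
def IsBessel (μ : Measure Ω) (F : Ω → U) (B : ℝ) : Prop :=
  0 < B ∧
  (∀ f : U, StronglyMeasurable fun ω => (inner A f (F ω) : A)) ∧
  (∀ f : U, Integrable (fun ω => (inner A f (F ω) : A) * inner A (F ω) f) μ) ∧
  ∀ f : U, (∫ ω, (inner A f (F ω) : A) * inner A (F ω) f ∂μ) ≤ B • (inner A f f : A)

/-- `φ : Ω → A` belongs to the Hilbert `A`-module `L²(Ω, A)`. -/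
def MemL2 (μ : Measure Ω) (φ : Ω → A) : Prop :=
  AEStronglyMeasurable φ μ ∧ Integrable (fun ω => star (φ ω) * φ ω) μ

/-- `G` is a dual of the continuous Bessel mapping `F` (weak reconstruction formula). -/
def IsDual (μ : Measure Ω) (F G : Ω → U) : Prop :=
  (∃ B : ℝ, IsBessel μ G B) ∧
  ∀ f g : U, (inner A f g : A) = ∫ ω, (inner A f (G ω) : A) * inner A (F ω) g ∂μ

/-!
If `‖Tg‖ ≤ c` on the unit ball, then for `f` and `ε > 0` put `h = ⟪f, f⟫ + ε` (strictly positive,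
hence invertible) and `g = f h^{-1/2}`. Then `⟪g, g⟫ = h^{-1/2} ⟪f, f⟫ h^{-1/2} ≤ 1`, so `‖g‖ ≤ 1`
and `⟪Tg, Tg⟫ ≤ c²`; since `T` is `A`-linear and `f = g h^{1/2}`,
`⟪Tf, Tf⟫ = h^{1/2} ⟪Tg, Tg⟫ h^{1/2} ≤ c² h = c² ⟪f, f⟫ + c² ε`, and `ε → 0` in the closed
positive cone gives `⟪Tf, Tf⟫ ≤ c² ⟪f, f⟫`. The converse is read off by taking norms, as
`‖x‖² = ‖⟪x, x⟫‖` and the norm is monotone on positive elements.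
-/

theorem le_of_forall_pos_le_add_smul {E : Type*} [AddCommGroup E] [PartialOrder E]
    [TopologicalSpace E] [ClosedIciTopology E] [Module ℝ E] [ContinuousAdd E] [ContinuousSMul ℝ E]
    {a b e : E} (h : ∀ ε : ℝ, 0 < ε → a ≤ b + ε • e) : a ≤ b := by
  have hlim : Filter.Tendsto (fun ε : ℝ => b + ε • e) (nhdsWithin 0 (Set.Ioi 0)) (nhds b) := by
    refine ((continuous_const.add (continuous_id.smul continuous_const)).tendsto' 0 b ?_).mono_left
      nhdsWithin_le_nhds
    simp
  exact ge_of_tendsto hlim (eventually_nhdsWithin_of_forall h)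

namespace CStarModuleRight

variable {W : Type*} [NormedAddCommGroup W] [NormedSpace ℂ W] [SMul Aᵐᵒᵖ W] [CStarModuleRight A W]

theorem inner_sub_right {x y z : W} : ⟪x, y - z⟫ = ⟪x, y⟫ - ⟪x, z⟫ := by
  rw [eq_sub_iff_add_eq, ← inner_add_right, sub_add_cancel]

theorem inner_op_smul_left {a : A} {x y : W} : ⟪x <• a, y⟫ = star a * ⟪x, y⟫ := by
  rw [← star_inner y, inner_op_smul_right, star_mul, star_inner]

theorem inner_self_op_smul {a : A} {x : W} : ⟪x <• a, x <• a⟫ = star a * ⟪x, x⟫ * a := by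
  rw [inner_op_smul_right, inner_op_smul_left]

theorem ext_inner_left {u v : W} (h : ∀ x : W, ⟪x, u⟫ = ⟪x, v⟫) : u = v := by
  have huv : ⟪u - v, u - v⟫ = 0 := by rw [inner_sub_right, h, sub_self]
  exact sub_eq_zero.mp (inner_self.mp huv)

theorem op_smul_op_smul {a b : A} {x : W} : x <• a <• b = x <• (a * b) :=
  ext_inner_left fun y => by simp only [inner_op_smul_right, mul_assoc]

theorem op_smul_one {x : W} : x <• (1 : A) = x :=
  ext_inner_left fun y => by rw [inner_op_smul_right, mul_one]

theorem sq_norm {x : W} : ‖x‖ ^ 2 = ‖⟪x, x⟫‖ := by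
  rw [norm_eq_sqrt_norm_inner_self x, Real.sq_sqrt (norm_nonneg _)]

theorem norm_le_one_of_inner_self_le_one {x : W} (hx : ⟪x, x⟫ ≤ 1) : ‖x‖ ≤ 1 := by
  rw [norm_eq_sqrt_norm_inner_self, Real.sqrt_le_one]
  exact (CStarAlgebra.norm_le_one_iff_of_nonneg _ inner_self_nonneg).mpr hx

theorem inner_self_le_algebraMap_of_norm_le {x : W} {c : ℝ} (hx : ‖x‖ ≤ c) :
    ⟪x, x⟫ ≤ algebraMap ℝ A (c ^ 2) := by
  rw [← CStarAlgebra.norm_le_iff_le_algebraMap _ (sq_nonneg c) inner_self_nonneg, ← sq_norm]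
  exact pow_le_pow_left₀ (norm_nonneg x) hx 2

theorem norm_le_sqrt_mul_norm_of_inner_self_le {X : Type*} [NormedAddCommGroup X]
    [NormedSpace ℂ X] [SMul Aᵐᵒᵖ X] [CStarModuleRight A X] {x : W} {y : X} {k : ℝ} (hk : 0 ≤ k)
    (h : ⟪y, y⟫ ≤ k • ⟪x, x⟫) : ‖y‖ ≤ √k * ‖x‖ := by
  have hnorm : ‖⟪y, y⟫‖ ≤ k * ‖x‖ ^ 2 := by
    calc ‖⟪y, y⟫‖ ≤ ‖k • ⟪x, x⟫‖ := CStarAlgebra.norm_le_norm_of_nonneg_of_le inner_self_nonneg h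
      _ = k * ‖x‖ ^ 2 := by rw [norm_smul, Real.norm_of_nonneg hk, sq_norm]
  calc ‖y‖ = √‖⟪y, y⟫‖ := norm_eq_sqrt_norm_inner_self y
    _ ≤ √(k * ‖x‖ ^ 2) := Real.sqrt_le_sqrt hnorm
    _ = √k * ‖x‖ := by rw [Real.sqrt_mul hk, Real.sqrt_sq (norm_nonneg x)]

theorem exists_op_smul_eq_of_inner_self_le {x : W} {h : A} (hh : IsStrictlyPositive h)
    (hx : ⟪x, x⟫ ≤ h) : ∃ (g : W) (a : A), g <• a = x ∧ ⟪g, g⟫ ≤ 1 ∧ star a * a = h := by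
  have hb : star (h ^ (-(1 / 2) : ℝ)) = h ^ (-(1 / 2) : ℝ) := (CFC.rpow_nonneg).star_eq
  have ha : star (h ^ (1 / 2 : ℝ)) = h ^ (1 / 2 : ℝ) := (CFC.rpow_nonneg).star_eq
  refine ⟨x <• h ^ (-(1 / 2) : ℝ), h ^ (1 / 2 : ℝ), ?_, ?_, ?_⟩
  · rw [op_smul_op_smul, ← CFC.rpow_add hh.isUnit, neg_add_cancel, CFC.rpow_zero h, op_smul_one]
  · calc ⟪x <• h ^ (-(1 / 2) : ℝ), x <• h ^ (-(1 / 2) : ℝ)⟫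
        = star (h ^ (-(1 / 2) : ℝ)) * ⟪x, x⟫ * h ^ (-(1 / 2) : ℝ) := inner_self_op_smul
      _ ≤ star (h ^ (-(1 / 2) : ℝ)) * h * h ^ (-(1 / 2) : ℝ) :=
          star_left_conjugate_le_conjugate hx _
      _ = 1 := by rw [hb, CFC.conjugate_rpow_neg_one_half h]
  · rw [ha, ← CFC.rpow_add hh.isUnit, add_halves, CFC.rpow_one h]

theorem inner_map_self_le_of_forall_norm_le_one {X : Type*} [NormedAddCommGroup X]
    [NormedSpace ℂ X] [SMul Aᵐᵒᵖ X] [CStarModuleRight A X] {T : W → X}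
    (hsmul : ∀ (a : A) (f : W), T (f <• a) = T f <• a) {c : ℝ}
    (hT : ∀ g : W, ‖g‖ ≤ 1 → ‖T g‖ ≤ c) (f : W) :
    ⟪T f, T f⟫ ≤ c ^ 2 • ⟪f, f⟫ := by
  have hreg : ∀ ε : ℝ, 0 < ε → ⟪T f, T f⟫ ≤ c ^ 2 • ⟪f, f⟫ + ε • (c ^ 2 • 1 : A) := by
    intro ε hε
    have hεA : IsStrictlyPositive (algebraMap ℝ A ε) := isStrictlyPositive_algebraMap hε
    obtain ⟨g, a, rfl, hg, ha⟩ := exists_op_smul_eq_of_inner_self_le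
      (IsStrictlyPositive.nonneg_add (inner_self_nonneg (x := f)) hεA)
      (le_add_of_nonneg_right hεA.nonneg)
    calc ⟪T (g <• a), T (g <• a)⟫ = star a * ⟪T g, T g⟫ * a := by rw [hsmul, inner_self_op_smul]
      _ ≤ star a * algebraMap ℝ A (c ^ 2) * a :=
          star_left_conjugate_le_conjugate
            (inner_self_le_algebraMap_of_norm_le (hT g (norm_le_one_of_inner_self_le_one hg))) a
      _ = c ^ 2 • ⟪g <• a, g <• a⟫ + ε • (c ^ 2 • 1 : A) := by
          rw [Algebra.algebraMap_eq_smul_one, mul_smul_comm, mul_one, smul_mul_assoc, ha,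
            Algebra.algebraMap_eq_smul_one, smul_add, smul_comm ε]
  exact le_of_forall_pos_le_add_smul hreg

end CStarModuleRight

theorem bounded_iff_inner_le_general
    {V : Type*} [NormedAddCommGroup V] [NormedSpace ℂ V]
    [SMul Aᵐᵒᵖ V] [CStarModuleRight A V]
    (T : U → V)
    (hsmul : ∀ (a : A) (f : U), T (f <• a) = T f <• a) :
    (∃ C : ℝ, ∀ f : U, ‖T f‖ ≤ C * ‖f‖) ↔
      ∃ k > (0 : ℝ), ∀ f : U, (inner A (T f) (T f) : A) ≤ k • (inner A f f : A) := by
  constructor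
  · rintro ⟨C, hC⟩
    refine ⟨max C 1 ^ 2, by positivity,
      CStarModuleRight.inner_map_self_le_of_forall_norm_le_one hsmul fun g hg => ?_⟩
    calc ‖T g‖ ≤ C * ‖g‖ := hC g
      _ ≤ max C 1 * 1 := mul_le_mul (le_max_left C 1) hg (norm_nonneg g) (by positivity)
      _ = max C 1 := mul_one _
  · rintro ⟨k, hk, hTk⟩
    exact ⟨√k, fun f => CStarModuleRight.norm_le_sqrt_mul_norm_of_inner_self_le hk.le (hTk f)⟩

/-- An `A`-linear map between Hilbert C*-modules is bounded iff
`⟨Tf, Tf⟩ ≤ k ⟨f, f⟩` for some `k > 0`. -/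
theorem bounded_iff_inner_le
    {V : Type*} [NormedAddCommGroup V] [NormedSpace ℂ V] [CompleteSpace V]
    [SMul Aᵐᵒᵖ V] [CStarModuleRight A V]
    (T : U → V)
    (hadd : ∀ f g : U, T (f + g) = T f + T g)
    (hsmul : ∀ (a : A) (f : U), T (f <• a) = T f <• a) :
    (∃ C : ℝ, ∀ f : U, ‖T f‖ ≤ C * ‖f‖) ↔
      ∃ k > (0 : ℝ), ∀ f : U, (inner A (T f) (T f) : A) ≤ k • (inner A f f : A) :=
  bounded_iff_inner_le_general T hsmul
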